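/- arXiv:1805.06642 — 8 statements merged into one kernel-verified Lean document; each statement's English description precedes it below -/
import Mathlib

section
/- For nonzero complex q with q² ≠ 1 and any natural number k, the quantity α_{k+1,m} = q^{γ+k-m+1/2} (q^m - (-1)^m)/(q - q^{-1}) - q^{-(γ+k-m+1/2)} (q^{-m} - (-1)^m)/(q - q^{-1}) is nonzero for every integer m with 1 ≤ m ≤ k+1, provided q is a positive real number different from 1 and γ > 0 is real. -/
/-! Multiplying by `q - q⁻¹` and writing `t = γ + k - m + 1/2`, the coefficient becomes
`s(t + m) - (-1)^m s(t)` with `s u = q^u - q^(-u) = 2 sinh (u log q)`, which is injective and odd.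
For even `m` a zero would force `t + m = t`, for odd `m` it would force `t + m = -t`, that is
`2γ + k = m - k - 1 ≤ 0`. -/

namespace Real

variable {q : ℝ}

theorem rpow_sub_rpow_neg_eq_two_mul_sinh (hq : 0 < q) (u : ℝ) :
    q ^ u - q ^ (-u) = 2 * sinh (log q * u) := by
  rw [rpow_def_of_pos hq, rpow_def_of_pos hq, sinh_eq, mul_neg]
  ring

theorem rpow_sub_rpow_neg_injective (hq0 : 0 < q) (hq1 : q ≠ 1) :
    Function.Injective fun u : ℝ => q ^ u - q ^ (-u) := by
  have hlog : log q ≠ 0 := log_ne_zero_of_pos_of_ne_one hq0 hq1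
  intro a b hab
  simp only [rpow_sub_rpow_neg_eq_two_mul_sinh hq0] at hab
  exact mul_left_cancel₀ hlog (sinh_injective (mul_left_cancel₀ two_ne_zero hab))

theorem rpow_sub_rpow_neg_eq_neg_iff (hq0 : 0 < q) (hq1 : q ≠ 1) (a b : ℝ) :
    q ^ a - q ^ (-a) = -(q ^ b - q ^ (-b)) ↔ a = -b := by
  rw [neg_sub, ← neg_neg b, neg_neg (-b)]
  exact (rpow_sub_rpow_neg_injective hq0 hq1).eq_iff

theorem sub_inv_ne_zero (hq0 : 0 < q) (hq1 : q ≠ 1) : q - q⁻¹ ≠ 0 := by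
  have h := (rpow_sub_rpow_neg_injective hq0 hq1).ne one_ne_zero
  simpa [rpow_neg_one] using h

theorem rpow_mul_sub_sub_rpow_neg_mul_sub (hq : 0 < q) (t x s : ℝ) :
    q ^ t * (q ^ x - s) - q ^ (-t) * (q ^ (-x) - s)
      = (q ^ (t + x) - q ^ (-(t + x))) - s * (q ^ t - q ^ (-t)) := by
  rw [neg_add, rpow_add hq, rpow_add hq]
  ring

end Real

open Real in
/-- The Fischer decomposition coefficients
`α_{k+1,m} = q^{γ+k-m+1/2}(q^m - (-1)^m)/(q-q⁻¹) - q^{-(γ+k-m+1/2)}(q^{-m} - (-1)^m)/(q-q⁻¹)`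
are nonzero for `1 ≤ m ≤ k+1`, where `q` is a positive real number different from `1`
and `γ > 0`. -/
theorem alpha_ne_zero (q γ : ℝ) (hq0 : 0 < q) (hq1 : q ≠ 1) (hγ : 0 < γ)
    (k m : ℕ) (hm1 : 1 ≤ m) (hm2 : m ≤ k + 1) :
    q ^ (γ + (k : ℝ) - (m : ℝ) + 1/2) * ((q ^ (m : ℝ) - (-1 : ℝ) ^ m) / (q - q⁻¹))
      - q ^ (-(γ + (k : ℝ) - (m : ℝ) + 1/2)) * ((q ^ (-(m : ℝ)) - (-1 : ℝ) ^ m) / (q - q⁻¹))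
      ≠ 0 := by
  set t : ℝ := γ + (k : ℝ) - (m : ℝ) + 1/2 with ht
  rw [mul_div_assoc', mul_div_assoc', ← sub_div, rpow_mul_sub_sub_rpow_neg_mul_sub hq0]
  refine div_ne_zero (sub_ne_zero.mpr ?_) (sub_inv_ne_zero hq0 hq1)
  have hm1' : (1 : ℝ) ≤ m := by exact_mod_cast hm1
  have hm2' : (m : ℝ) ≤ k + 1 := by exact_mod_cast hm2
  rcases Nat.even_or_odd m with hm | hm
  · rw [hm.neg_one_pow, one_mul, (rpow_sub_rpow_neg_injective hq0 hq1).ne_iff]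
    linarith
  · rw [hm.neg_one_pow, neg_one_mul, Ne, rpow_sub_rpow_neg_eq_neg_iff hq0 hq1]
    linarith
end

section
/- Let A be an associative unital algebra over ℂ, and q a nonzero complex number with q ≠ ±1. If elements A₊, A₋, K, K⁻¹, P of A satisfy the osp_q(1|2) relations: K A₊ K⁻¹ = q^{1/2} A₊, K A₋ K⁻¹ = q^{-1/2} A₋, A₊A₋ + A₋A₊ = (K² - K⁻²)/(q^{1/2} - q^{-1/2}), P A₊ = -A₊ P, P A₋ = -A₋ P, P K = K P, K K⁻¹ = K⁻¹ K = 1, P² = 1, then the element Γ = (−A₊A₋ + (q^{-1/2} K² − q^{1/2} K⁻²)/(q − q^{-1})) P commutes with A₊. -/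
/-! Write `Γ = C P` with `C = ospCasimirCore`. Since `P` anticommutes with `A₊`, it suffices
that `C` anticommutes with `A₊`. Conjugation by `K` scales `A₊` by `q^{1/2}`, so
`K^{±2} A₊ = q^{±1} A₊ K^{±2}`; with the anticommutator relation this turns `C A₊ + A₊ C` into a
combination of `A₊K²` and `A₊K⁻²` whose coefficients vanish because
`q - q⁻¹ = (q^{1/2} - q^{-1/2}) (q^{1/2} + q^{-1/2})`. -/

theorem commute_mul_of_anticomm {R : Type*} [Ring R] {x p a : R}
    (hx : x * a = -(a * x)) (hp : p * a = -(a * p)) : Commute (x * p) a := by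
  change x * p * a = a * (x * p)
  rw [mul_assoc, hp, mul_neg, ← mul_assoc, hx, neg_mul, neg_neg, mul_assoc]

section Conjugation

variable {A : Type*} [Semiring A] {k k' a : A}

theorem mul_eq_smul_mul_of_mul_mul_eq {R : Type*} [CommSemiring R] [Algebra R A] {t : R}
    (h : k * a * k' = t • a) (hk : k' * k = 1) : k * a = t • (a * k) := by
  rw [← smul_mul_assoc, ← h, mul_assoc _ k', hk, mul_one]

theorem mul_eq_inv_smul_mul_of_mul_mul_eq {R : Type*} [Semifield R] [Algebra R A] {t : R}
    (h : k * a * k' = t • a) (hk : k' * k = 1) (ht : t ≠ 0) :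
    k' * a = t⁻¹ • (a * k') := by
  calc k' * a = t⁻¹ • (k' * (t • a)) := by rw [mul_smul_comm, inv_smul_smul₀ ht]
    _ = t⁻¹ • (a * k') := by rw [← h, ← mul_assoc, ← mul_assoc, hk, one_mul]

theorem pow_mul_eq_smul_mul_pow {R : Type*} [CommSemiring R] [Algebra R A] {t : R}
    (h : k * a = t • (a * k)) (n : ℕ) : k ^ n * a = t ^ n • (a * k ^ n) := by
  induction n with
  | zero => simp
  | succ n ih =>
    rw [pow_succ, mul_assoc, h, mul_smul_comm, ← mul_assoc, ih, smul_mul_assoc, smul_smul,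
      mul_assoc, ← pow_succ, ← pow_succ']

end Conjugation

theorem inv_sub_inv_mul_add_inv {F : Type*} [Field F] {q s : F} (hs : s ^ 2 = q)
    (hadd : s + s⁻¹ ≠ 0) : (q - q⁻¹)⁻¹ * (s + s⁻¹) = (s - s⁻¹)⁻¹ := by
  have : q - q⁻¹ = (s - s⁻¹) * (s + s⁻¹) := by rw [← hs, ← inv_pow]; ring
  rw [this, mul_inv, mul_assoc, inv_mul_cancel₀ hadd, mul_one]

theorem add_inv_ne_zero_of_sq_ne_neg_one {F : Type*} [Field F] {s : F} (hs0 : s ≠ 0)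
    (hs : s ^ 2 ≠ -1) : s + s⁻¹ ≠ 0 := by
  intro h
  apply hs
  field_simp at h
  linear_combination h

section Casimir

variable {F A : Type*} [Field F] [Ring A] [Algebra F A]

def ospCasimirCore (q s : F) (Ap Am K K' : A) : A :=
  -(Ap * Am) + (q - q⁻¹)⁻¹ • (s⁻¹ • K ^ 2 - s • K' ^ 2)

theorem ospCasimirCore_mul_eq_neg_mul {q s : F} (hq0 : q ≠ 0) (hqm1 : q ≠ -1) (hs : s ^ 2 = q)
    {Ap Am K K' : A} (h1 : K * Ap * K' = s • Ap)
    (h3 : Ap * Am + Am * Ap = (s - s⁻¹)⁻¹ • (K ^ 2 - K' ^ 2)) (h8 : K' * K = 1) :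
    ospCasimirCore q s Ap Am K K' * Ap = -(Ap * ospCasimirCore q s Ap Am K K') := by
  have hs0 : s ≠ 0 := ne_zero_pow two_ne_zero (hs ▸ hq0)
  have hK2 : K ^ 2 * Ap = q • (Ap * K ^ 2) :=
    hs ▸ pow_mul_eq_smul_mul_pow (mul_eq_smul_mul_of_mul_mul_eq h1 h8) 2
  have hK'2 : K' ^ 2 * Ap = q⁻¹ • (Ap * K' ^ 2) := by
    rw [← hs, ← inv_pow]
    exact pow_mul_eq_smul_mul_pow (mul_eq_inv_smul_mul_of_mul_mul_eq h1 h8 hs0) 2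
  have hA : Ap * (Am * Ap) = (s - s⁻¹)⁻¹ • (Ap * K ^ 2 - Ap * K' ^ 2) - Ap * (Ap * Am) := by
    rw [eq_sub_iff_add_eq, ← mul_add, add_comm, h3, mul_smul_comm, mul_sub]
  have hc : (q - q⁻¹)⁻¹ * (s + s⁻¹) = (s - s⁻¹)⁻¹ :=
    inv_sub_inv_mul_add_inv hs (add_inv_ne_zero_of_sq_ne_neg_one hs0 (hs ▸ hqm1))
  have hsq : s⁻¹ * q = s := by rw [← hs]; field_simp
  have hsq' : s * q⁻¹ = s⁻¹ := by rw [← hs]; field_simp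
  simp only [ospCasimirCore, add_mul, mul_add, neg_mul, mul_neg, smul_mul_assoc, mul_smul_comm,
    sub_mul, mul_sub, smul_sub, mul_assoc, hK2, hK'2, hA]
  match_scalars
  · linear_combination hc + (q - q⁻¹)⁻¹ * hsq
  · linear_combination -hc - (q - q⁻¹)⁻¹ * hsq'
  · ring

end Casimir

theorem casimir_commutes_Aplus_general {A : Type*} [Ring A] [Algebra ℂ A]
    (q s : ℂ) (hq0 : q ≠ 0) (hqm1 : q ≠ -1) (hs : s ^ 2 = q)
    (Ap Am K K' P : A)
    (h1 : K * Ap * K' = s • Ap)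
    (h3 : Ap * Am + Am * Ap = (s - s⁻¹)⁻¹ • (K ^ 2 - K' ^ 2))
    (h4 : P * Ap = -(Ap * P)) (h8 : K' * K = 1) :
    ((-(Ap * Am) + (q - q⁻¹)⁻¹ • (s⁻¹ • K ^ 2 - s • K' ^ 2)) * P) * Ap
      = Ap * ((-(Ap * Am) + (q - q⁻¹)⁻¹ • (s⁻¹ • K ^ 2 - s • K' ^ 2)) * P) :=
  (commute_mul_of_anticomm (ospCasimirCore_mul_eq_neg_mul hq0 hqm1 hs h1 h3 h8) h4).eq

/-- If elements `A₊, A₋, K, K⁻¹, P` of an associative unital ℂ-algebra satisfy the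
`osp_q(1|2)` relations (with `s = q^{1/2}` a fixed square root of `q`), then the Casimir
element `Γ = (−A₊A₋ + (q^{-1/2}K² − q^{1/2}K⁻²)/(q − q⁻¹)) P` commutes with `A₊`. -/
theorem casimir_commutes_Aplus {A : Type*} [Ring A] [Algebra ℂ A]
    (q s : ℂ) (hq0 : q ≠ 0) (hq1 : q ≠ 1) (hqm1 : q ≠ -1) (hs : s ^ 2 = q)
    (Ap Am K K' P : A)
    (h1 : K * Ap * K' = s • Ap)
    (h2 : K * Am * K' = s⁻¹ • Am)
    (h3 : Ap * Am + Am * Ap = (s - s⁻¹)⁻¹ • (K ^ 2 - K' ^ 2))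
    (h4 : P * Ap = -(Ap * P)) (h5 : P * Am = -(Am * P)) (h6 : P * K = K * P)
    (h7 : K * K' = 1) (h8 : K' * K = 1) (h9 : P ^ 2 = 1) :
    ((-(Ap * Am) + (q - q⁻¹)⁻¹ • (s⁻¹ • K ^ 2 - s • K' ^ 2)) * P) * Ap
      = Ap * ((-(Ap * Am) + (q - q⁻¹)⁻¹ • (s⁻¹ • K ^ 2 - s • K' ^ 2)) * P) :=
  casimir_commutes_Aplus_general q s hq0 hqm1 hs Ap Am K K' P h1 h3 h4 h8
end

section
/- In the subalgebra I of osp_q(1|2) generated by X = A₊K, Y = A₋K, Z = K²P, and Γ (the Casimir element), the following relations hold: Z Y = −q^{-1} Y Z, Z X = −q X Z, and q^{1/2} X Y + q^{-1/2} Y X = (Z² − 1)/(q^{1/2} − q^{-1/2}). -/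
/-- In the coideal subalgebra of `osp_q(1|2)` generated by `X = A₊K`, `Y = A₋K`,
`Z = K²P` (and the Casimir), one has `Z Y = −q⁻¹ Y Z`, `Z X = −q X Z`, and
`q^{1/2} X Y + q^{-1/2} Y X = (Z² − 1)/(q^{1/2} − q^{-1/2})`. -/
theorem coideal_relations {A : Type*} [Ring A] [Algebra ℂ A]
    (q s : ℂ) (hq0 : q ≠ 0) (hq1 : q ≠ 1) (hqm1 : q ≠ -1) (hs : s ^ 2 = q)
    (Ap Am K K' P : A)
    (h1 : K * Ap * K' = s • Ap)
    (h2 : K * Am * K' = s⁻¹ • Am)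
    (h3 : Ap * Am + Am * Ap = (s - s⁻¹)⁻¹ • (K ^ 2 - K' ^ 2))
    (h4 : P * Ap = -(Ap * P)) (h5 : P * Am = -(Am * P)) (h6 : P * K = K * P)
    (h7 : K * K' = 1) (h8 : K' * K = 1) (h9 : P ^ 2 = 1) :
    (K ^ 2 * P) * (Am * K) = -(q⁻¹ • ((Am * K) * (K ^ 2 * P)))
    ∧ (K ^ 2 * P) * (Ap * K) = -(q • ((Ap * K) * (K ^ 2 * P)))
    ∧ s • ((Ap * K) * (Am * K)) + s⁻¹ • ((Am * K) * (Ap * K))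
        = (s - s⁻¹)⁻¹ • ((K ^ 2 * P) ^ 2 - 1) := by
  have hs0 : s ≠ 0 := by
    intro h; apply hq0; rw [← hs, h]; ring
  have hKAp : K * Ap = s • (Ap * K) := by
    have : K * Ap * K' * K = (s • Ap) * K := by rw [h1]
    rw [mul_assoc (K * Ap), h8, mul_one, smul_mul_assoc] at this
    exact this
  have hKAm : K * Am = s⁻¹ • (Am * K) := by
    have : K * Am * K' * K = (s⁻¹ • Am) * K := by rw [h2]
    rw [mul_assoc (K * Am), h8, mul_one, smul_mul_assoc] at this
    exact this
  have hPK2 : P * K ^ 2 = K ^ 2 * P := by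
    rw [pow_two, ← mul_assoc, h6, mul_assoc, h6, mul_assoc]
  have hZ2 : (K ^ 2 * P) ^ 2 = K ^ 4 := by
    rw [pow_two, mul_assoc, ← mul_assoc P, hPK2, mul_assoc, ← pow_two, h9,
      mul_one]; noncomm_ring
  refine ⟨?_, ?_, ?_⟩
  · -- Z Y = -q⁻¹ Y Z
    have hsq : q⁻¹ = s⁻¹ * s⁻¹ := by rw [← mul_inv, ← pow_two, hs]
    calc K ^ 2 * P * (Am * K)
        = K ^ 2 * (P * Am) * K := by noncomm_ring
      _ = -(K * (K * Am) * (P * K)) := by rw [h5]; noncomm_ring [pow_two]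
      _ = -(s⁻¹ • (K * (Am * K) * (P * K))) := by rw [hKAm]; simp [mul_smul_comm, smul_mul_assoc]
      _ = -(s⁻¹ • ((K * Am) * (K * (P * K)))) := by noncomm_ring
      _ = -((s⁻¹ * s⁻¹) • (Am * K * (K * (K * P)))) := by
          rw [hKAm, h6]; simp [mul_smul_comm, smul_mul_assoc, mul_smul]
      _ = -(q⁻¹ • (Am * K * (K ^ 2 * P))) := by rw [hsq]; noncomm_ring [pow_two]
  · -- Z X = -q X Z
    have hsq : q = s * s := by rw [← pow_two, hs]
    calc K ^ 2 * P * (Ap * K)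
        = K ^ 2 * (P * Ap) * K := by noncomm_ring
      _ = -(K * (K * Ap) * (P * K)) := by rw [h4]; noncomm_ring [pow_two]
      _ = -(s • (K * (Ap * K) * (P * K))) := by rw [hKAp]; simp [mul_smul_comm, smul_mul_assoc]
      _ = -(s • ((K * Ap) * (K * (P * K)))) := by noncomm_ring
      _ = -((s * s) • (Ap * K * (K * (K * P)))) := by
          rw [hKAp, h6]; simp [mul_smul_comm, smul_mul_assoc, mul_smul]
      _ = -(q • (Ap * K * (K ^ 2 * P))) := by rw [hsq]; noncomm_ring [pow_two]
  · -- main relation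
    have e1 : (Ap * K) * (Am * K) = s⁻¹ • (Ap * Am * K ^ 2) := by
      calc Ap * K * (Am * K) = Ap * (K * Am) * K := by noncomm_ring
        _ = s⁻¹ • (Ap * Am * K ^ 2) := by
            rw [hKAm]; simp [mul_smul_comm, smul_mul_assoc]; noncomm_ring [pow_two]
    have e2 : (Am * K) * (Ap * K) = s • (Am * Ap * K ^ 2) := by
      calc Am * K * (Ap * K) = Am * (K * Ap) * K := by noncomm_ring
        _ = s • (Am * Ap * K ^ 2) := by
            rw [hKAp]; simp [mul_smul_comm, smul_mul_assoc]; noncomm_ring [pow_two]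
    have hKK : K' ^ 2 * K ^ 2 = 1 := by
      calc K' ^ 2 * K ^ 2 = K' * (K' * K) * K := by noncomm_ring
        _ = 1 := by rw [h8, mul_one, h8]
    rw [e1, e2, smul_smul, smul_smul, mul_inv_cancel₀ hs0, inv_mul_cancel₀ hs0,
      one_smul, one_smul, ← add_mul, h3, smul_mul_assoc, hZ2]
    congr 1
    rw [sub_mul, hKK, ← pow_add]
end

section
/- Let q be nonzero complex, q ≠ ±1, with fixed square root q^{1/2}, and set Q = i q^{1/2}. Given elements A₊, A₋, K, K⁻¹, P of an associative ℂ-algebra satisfying the osp_q(1|2) relations, define Ẽ = ((1 + Q⁻²)/(Q − Q⁻¹)) A₊, F̃ = −iQ A₋P, K̃ = K²P, K̃⁻¹ = K⁻²P. Then these elements satisfy the U_Q(sl₂) relations: K̃K̃⁻¹ = K̃⁻¹K̃ = 1, K̃Ẽ = Q²ẼK̃, K̃F̃ = Q⁻²F̃K̃, and ẼF̃ − F̃Ẽ = (K̃ − K̃⁻¹)/(Q − Q⁻¹). -/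
/-- Given elements of a ℂ-algebra satisfying the `osp_q(1|2)` relations, with
`Q = i q^{1/2}`, the elements `Ẽ = ((1+Q⁻²)/(Q−Q⁻¹)) A₊`, `F̃ = −iQ A₋P`, `K̃ = K²P`,
`K̃⁻¹ = K⁻²P` satisfy the `U_Q(sl₂)` relations. -/
theorem osp_to_uqsl2 {A : Type*} [Ring A] [Algebra ℂ A]
    (q s : ℂ) (hq0 : q ≠ 0) (hq1 : q ≠ 1) (hqm1 : q ≠ -1) (hs : s ^ 2 = q)
    (Ap Am K K' P : A)
    (h1 : K * Ap * K' = s • Ap)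
    (h2 : K * Am * K' = s⁻¹ • Am)
    (h3 : Ap * Am + Am * Ap = (s - s⁻¹)⁻¹ • (K ^ 2 - K' ^ 2))
    (h4 : P * Ap = -(Ap * P)) (h5 : P * Am = -(Am * P)) (h6 : P * K = K * P)
    (h7 : K * K' = 1) (h8 : K' * K = 1) (h9 : P ^ 2 = 1)
    (Q : ℂ) (hQ : Q = Complex.I * s)
    (Et Ft Kt Kt' : A)
    (hEt : Et = ((1 + (Q ^ 2)⁻¹) / (Q - Q⁻¹)) • Ap)
    (hFt : Ft = (-(Complex.I) * Q) • (Am * P))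
    (hKt : Kt = K ^ 2 * P) (hKt' : Kt' = K' ^ 2 * P) :
    Kt * Kt' = 1 ∧ Kt' * Kt = 1
    ∧ Kt * Et = Q ^ 2 • (Et * Kt)
    ∧ Kt * Ft = (Q ^ 2)⁻¹ • (Ft * Kt)
    ∧ Et * Ft - Ft * Et = (Q - Q⁻¹)⁻¹ • (Kt - Kt') := by
  have hs0 : s ≠ 0 := fun h => hq0 (by rw [← hs, h]; ring)
  have hs2 : s ^ 2 ≠ 1 := fun h => hq1 (by rw [← hs, h])
  have hsm2 : s ^ 2 ≠ -1 := fun h => hqm1 (by rw [← hs, h])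
  have hQ0 : Q ≠ 0 := by rw [hQ]; exact mul_ne_zero Complex.I_ne_zero hs0
  have hQ2 : Q ^ 2 = -s ^ 2 := by
    rw [hQ, mul_pow, Complex.I_sq]; ring
  -- parity commutations
  have hPK' : P * K' = K' * P := by
    calc P * K' = K' * K * (P * K') := by rw [h8, one_mul]
      _ = K' * (K * P) * K' := by noncomm_ring
      _ = K' * (P * K) * K' := by conv_lhs => rw [← h6]
      _ = K' * P * (K * K') := by noncomm_ring
      _ = K' * P := by rw [h7, mul_one]
  have hKA : K * Ap = s • (Ap * K) := by
    calc K * Ap = (K * Ap * K') * K := by rw [mul_assoc, mul_assoc, h8, mul_one]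
      _ = s • (Ap * K) := by rw [h1, smul_mul_assoc]
  have hKAm : K * Am = s⁻¹ • (Am * K) := by
    calc K * Am = (K * Am * K') * K := by rw [mul_assoc, mul_assoc, h8, mul_one]
      _ = s⁻¹ • (Am * K) := by rw [h2, smul_mul_assoc]
  have hK2A : K ^ 2 * Ap = (s ^ 2) • (Ap * K ^ 2) := by
    calc K ^ 2 * Ap = K * (K * Ap) := by rw [sq, mul_assoc]
      _ = K * (s • (Ap * K)) := by rw [hKA]
      _ = s • ((K * Ap) * K) := by rw [mul_smul_comm, mul_assoc]
      _ = s • ((s • (Ap * K)) * K) := by rw [hKA]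
      _ = (s * s) • (Ap * (K * K)) := by rw [smul_mul_assoc, smul_smul, mul_assoc]
      _ = (s ^ 2) • (Ap * K ^ 2) := by rw [sq, sq]
  have hK2Am : K ^ 2 * Am = (s ^ 2)⁻¹ • (Am * K ^ 2) := by
    calc K ^ 2 * Am = K * (K * Am) := by rw [sq, mul_assoc]
      _ = K * (s⁻¹ • (Am * K)) := by rw [hKAm]
      _ = s⁻¹ • ((K * Am) * K) := by rw [mul_smul_comm, mul_assoc]
      _ = s⁻¹ • ((s⁻¹ • (Am * K)) * K) := by rw [hKAm]
      _ = (s⁻¹ * s⁻¹) • (Am * (K * K)) := by rw [smul_mul_assoc, smul_smul, mul_assoc]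
      _ = (s ^ 2)⁻¹ • (Am * K ^ 2) := by rw [sq, sq, mul_inv]
  -- part 1
  have c1 : Kt * Kt' = 1 := by
    rw [hKt, hKt']
    calc K ^ 2 * P * (K' ^ 2 * P)
        = K * (K * ((P * K') * (K' * P))) := by noncomm_ring
      _ = K * (K * ((K' * P) * (K' * P))) := by conv_lhs => rw [hPK']
      _ = K * (K * (K' * ((P * K') * P))) := by noncomm_ring
      _ = K * (K * (K' * ((K' * P) * P))) := by conv_lhs => rw [hPK']
      _ = (K * (K * K') * K') * (P * P) := by noncomm_ring
      _ = (K * 1 * K') * (P * P) := by conv_lhs => rw [h7]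
      _ = (K * K') * (P * P) := by rw [mul_one]
      _ = 1 * (P * P) := by conv_lhs => rw [h7]
      _ = P ^ 2 := by rw [one_mul, sq]
      _ = 1 := h9
  have c2 : Kt' * Kt = 1 := by
    rw [hKt, hKt']
    calc K' ^ 2 * P * (K ^ 2 * P)
        = K' * (K' * ((P * K) * (K * P))) := by noncomm_ring
      _ = K' * (K' * ((K * P) * (K * P))) := by conv_lhs => rw [h6]
      _ = K' * (K' * (K * ((P * K) * P))) := by noncomm_ring
      _ = K' * (K' * (K * ((K * P) * P))) := by conv_lhs => rw [h6]
      _ = (K' * (K' * K) * K) * (P * P) := by noncomm_ring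
      _ = (K' * 1 * K) * (P * P) := by conv_lhs => rw [h8]
      _ = (K' * K) * (P * P) := by rw [mul_one]
      _ = 1 * (P * P) := by conv_lhs => rw [h8]
      _ = P ^ 2 := by rw [one_mul, sq]
      _ = 1 := h9
  -- Kt and Ap
  have hKtA : Kt * Ap = Q ^ 2 • (Ap * Kt) := by
    rw [hKt, hQ2]
    calc K ^ 2 * P * Ap = K ^ 2 * (P * Ap) := by rw [mul_assoc]
      _ = K ^ 2 * (-(Ap * P)) := by conv_lhs => rw [h4]
      _ = -((K ^ 2 * Ap) * P) := by noncomm_ring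
      _ = -((s ^ 2 • (Ap * K ^ 2)) * P) := by conv_lhs => rw [hK2A]
      _ = (-s ^ 2) • (Ap * (K ^ 2 * P)) := by
          rw [smul_mul_assoc, mul_assoc, neg_smul]
  have c3 : Kt * Et = Q ^ 2 • (Et * Kt) := by
    rw [hEt, mul_smul_comm, smul_mul_assoc, hKtA, smul_comm]
  -- Kt and Am*P
  have hKtF : Kt * (Am * P) = (Q ^ 2)⁻¹ • (Am * P * Kt) := by
    rw [hKt, hQ2]
    have e1 : K ^ 2 * P * (Am * P) = -(K ^ 2 * Am) := by
      calc K ^ 2 * P * (Am * P) = K ^ 2 * (P * Am) * P := by noncomm_ring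
        _ = K ^ 2 * (-(Am * P)) * P := by conv_lhs => rw [h5]
        _ = -(K ^ 2 * Am * (P * P)) := by noncomm_ring
        _ = -(K ^ 2 * Am * P ^ 2) := by conv_lhs => rw [← sq]
        _ = -(K ^ 2 * Am) := by rw [h9, mul_one]
    have e2 : Am * P * (K ^ 2 * P) = Am * K ^ 2 := by
      calc Am * P * (K ^ 2 * P) = Am * ((P * K) * K) * P := by noncomm_ring
        _ = Am * ((K * P) * K) * P := by conv_lhs => rw [h6]
        _ = Am * (K * (P * K)) * P := by noncomm_ring
        _ = Am * (K * (K * P)) * P := by conv_lhs => rw [h6]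
        _ = Am * (K * K) * (P * P) := by noncomm_ring
        _ = Am * K ^ 2 * P ^ 2 := by rw [← sq, ← sq]
        _ = Am * K ^ 2 := by rw [h9, mul_one]
    rw [e1, e2, hK2Am, ← neg_smul, neg_inv]
  have c4 : Kt * Ft = (Q ^ 2)⁻¹ • (Ft * Kt) := by
    rw [hFt, mul_smul_comm, smul_mul_assoc, hKtF, smul_comm]
  -- scalars
  have hss : s - s⁻¹ ≠ 0 := by
    intro h
    apply hs2
    have h2 : s * (s - s⁻¹) = 0 := by rw [h, mul_zero]
    rw [mul_sub, mul_inv_cancel₀ hs0, sub_eq_zero] at h2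
    rw [sq]; exact h2
  have hQQ : Q - Q⁻¹ ≠ 0 := by
    intro h
    apply hsm2
    have h2 : Q * (Q - Q⁻¹) = 0 := by rw [h, mul_zero]
    rw [mul_sub, mul_inv_cancel₀ hQ0, sub_eq_zero] at h2
    have h3 : Q ^ 2 = 1 := by rw [sq]; exact h2
    rw [hQ2] at h3
    linear_combination -h3
  have hmIQ : -(Complex.I) * Q = s := by
    rw [hQ, ← mul_assoc, neg_mul, Complex.I_mul_I, neg_neg, one_mul]
  have hQ2inv : (Q ^ 2)⁻¹ = -(s ^ 2)⁻¹ := by rw [hQ2, ← neg_inv]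
  have key0 : (1 + (Q ^ 2)⁻¹) * (-(Complex.I) * Q) = s - s⁻¹ := by
    rw [hQ2inv, hmIQ]
    field_simp
    ring
  have scal : ((1 + (Q ^ 2)⁻¹) / (Q - Q⁻¹)) * (-(Complex.I) * Q) * (s - s⁻¹)⁻¹
      = (Q - Q⁻¹)⁻¹ := by
    rw [div_mul_eq_mul_div, key0, div_mul_eq_mul_div, mul_inv_cancel₀ hss, one_div]
  have c5 : Et * Ft - Ft * Et = (Q - Q⁻¹)⁻¹ • (Kt - Kt') := by
    rw [hEt, hFt, hKt, hKt']
    rw [smul_mul_assoc, mul_smul_comm, smul_smul, smul_mul_assoc, mul_smul_comm,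
      smul_smul, mul_comm (-(Complex.I) * Q) ((1 + (Q ^ 2)⁻¹) / (Q - Q⁻¹)), ← smul_sub]
    have key : Ap * (Am * P) - Am * P * Ap = (s - s⁻¹)⁻¹ • (K ^ 2 * P - K' ^ 2 * P) := by
      calc Ap * (Am * P) - Am * P * Ap
          = Ap * Am * P - Am * (P * Ap) := by noncomm_ring
        _ = Ap * Am * P - Am * (-(Ap * P)) := by conv_lhs => rw [h4]
        _ = (Ap * Am + Am * Ap) * P := by noncomm_ring
        _ = (s - s⁻¹)⁻¹ • ((K ^ 2 - K' ^ 2) * P) := by rw [h3, smul_mul_assoc]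
        _ = (s - s⁻¹)⁻¹ • (K ^ 2 * P - K' ^ 2 * P) := by rw [sub_mul]
    rw [key, smul_smul, scal]
  exact ⟨c1, c2, c3, c4, c5⟩
end

section
/- Let q be a nonzero complex number with |q| ≠ 1, and define the q-Dunkl operator D_i^q on polynomials in n real variables by D_i^q f = (q^{μ_i}/(q−q⁻¹)) (T_{q,i}f − r_i f)/x_i − (q^{−μ_i}/(q−q⁻¹)) (T_{q,i}⁻¹f − r_i f)/x_i, where T_{q,i} scales the i-th variable by q, and r_i f(x₁,…,xₙ) = f(x₁,…,−x_i,…,xₙ). Then for i ≠ j the operators commute: D_i^q D_j^q = D_j^q D_i^q on polynomials. -/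
open MvPolynomial

/-- The operator rescaling the `i`-th variable by `c` (e.g. the q-shift `T_{q,i}` for
`c = q`, or the reflection `r_i` for `c = -1`). -/
noncomputable def varScale (n : ℕ) (c : ℂ) (i : Fin n) :
    MvPolynomial (Fin n) ℂ →ₐ[ℂ] MvPolynomial (Fin n) ℂ :=
  aeval (fun j => if j = i then c • X j else X j)

/-- Formal division by the variable `x_i` (valid on polynomials each of whose monomials
contains a positive power of `x_i`). -/
noncomputable def divXi (n : ℕ) (i : Fin n) (f : MvPolynomial (Fin n) ℂ) :
    MvPolynomial (Fin n) ℂ :=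
  ∑ α ∈ f.support, monomial (α - Finsupp.single i 1) (coeff α f)

/-- The `ℤ₂ⁿ` q-Dunkl operator
`D_i^q = (q^{μ_i}/(q−q⁻¹)) (T_{q,i} − r_i)/x_i − (q^{−μ_i}/(q−q⁻¹)) (T_{q,i}⁻¹ − r_i)/x_i`. -/
noncomputable def qDunkl (n : ℕ) (q : ℂ) (μ : Fin n → ℝ) (i : Fin n)
    (f : MvPolynomial (Fin n) ℂ) : MvPolynomial (Fin n) ℂ :=
  (q ^ ((μ i : ℝ) : ℂ) / (q - q⁻¹)) • divXi n i (varScale n q i f - varScale n (-1) i f)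
    - (q ^ ((-(μ i) : ℝ) : ℂ) / (q - q⁻¹)) • divXi n i (varScale n q⁻¹ i f - varScale n (-1) i f)

/-! `D_i^q` sends `x^α` to `c(μ_i, α_i) x^(α - e_i)`, a scalar depending only on the `i`-th
exponent (it vanishes when `α_i = 0`, so the truncated subtraction `α - e_i` is harmless).
For `i ≠ j` lowering `x_j` leaves the `i`-th exponent unchanged, so `D_i D_j` and `D_j D_i` both
send `x^α` to `c(μ_i, α_i) c(μ_j, α_j) x^(α - e_i - e_j)`; linearity does the rest. -/

noncomputable def qDunklCoeff (q : ℂ) (m : ℝ) (k : ℕ) : ℂ :=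
  (q ^ (m : ℂ) / (q - q⁻¹)) * (q ^ k - (-1) ^ k)
    - (q ^ ((-m : ℝ) : ℂ) / (q - q⁻¹)) * (q⁻¹ ^ k - (-1) ^ k)

section

variable {n : ℕ}

theorem varScale_monomial (c : ℂ) (i : Fin n) (α : Fin n →₀ ℕ) (a : ℂ) :
    varScale n c i (monomial α a) = c ^ α i • monomial α a := by
  classical
  have hX : ∀ j, (if j = i then c • X j else X j : MvPolynomial (Fin n) ℂ)
      = C (if j = i then c else 1) * X j := by
    intro j; split_ifs <;> simp [smul_eq_C_mul]
  have hc : (α.prod fun j k => (if j = i then c else 1) ^ k) = c ^ α i := by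
    simp +contextual [ite_pow, Finsupp.prod_ite_eq']
  rw [varScale, aeval_monomial]
  simp only [hX, mul_pow, Finsupp.prod_mul, ← map_pow]
  rw [← map_finsuppProd, hc, monomial_eq, smul_eq_C_mul, algebraMap_eq]
  ring

theorem divXi_eq_sum_of_support_subset (i : Fin n) {f : MvPolynomial (Fin n) ℂ}
    {S : Finset (Fin n →₀ ℕ)} (h : f.support ⊆ S) :
    divXi n i f = ∑ α ∈ S, monomial (α - Finsupp.single i 1) (coeff α f) :=
  Finset.sum_subset h fun α _ hα => by rw [notMem_support_iff.mp hα, map_zero]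

theorem divXi_monomial (i : Fin n) (α : Fin n →₀ ℕ) (a : ℂ) :
    divXi n i (monomial α a) = monomial (α - Finsupp.single i 1) a := by
  rw [divXi_eq_sum_of_support_subset i (support_monomial_subset (a := a)),
    Finset.sum_singleton, coeff_monomial, if_pos rfl]

theorem divXi_add (i : Fin n) (f g : MvPolynomial (Fin n) ℂ) :
    divXi n i (f + g) = divXi n i f + divXi n i g := by
  classical
  rw [divXi_eq_sum_of_support_subset i support_add,
    divXi_eq_sum_of_support_subset i Finset.subset_union_left,
    divXi_eq_sum_of_support_subset i Finset.subset_union_right, ← Finset.sum_add_distrib]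
  simp only [coeff_add, map_add]

theorem divXi_smul (i : Fin n) (c : ℂ) (f : MvPolynomial (Fin n) ℂ) :
    divXi n i (c • f) = c • divXi n i f := by
  rw [divXi_eq_sum_of_support_subset i support_smul, divXi, Finset.smul_sum]
  simp only [coeff_smul, smul_monomial]

variable (q : ℂ) (μ : Fin n → ℝ)

theorem qDunkl_add (i : Fin n) (f g : MvPolynomial (Fin n) ℂ) :
    qDunkl n q μ i (f + g) = qDunkl n q μ i f + qDunkl n q μ i g := by
  simp only [qDunkl, map_add, add_sub_add_comm, divXi_add, smul_add]

theorem qDunkl_monomial (i : Fin n) (α : Fin n →₀ ℕ) (a : ℂ) :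
    qDunkl n q μ i (monomial α a) =
      qDunklCoeff q (μ i) (α i) • monomial (α - Finsupp.single i 1) a := by
  simp only [qDunkl, varScale_monomial, ← sub_smul, divXi_smul, divXi_monomial, smul_smul,
    qDunklCoeff]

theorem qDunkl_qDunkl_monomial {i j : Fin n} (hij : i ≠ j) (α : Fin n →₀ ℕ) (a : ℂ) :
    qDunkl n q μ i (qDunkl n q μ j (monomial α a)) =
      (qDunklCoeff q (μ i) (α i) * qDunklCoeff q (μ j) (α j)) •
        monomial (α - Finsupp.single i 1 - Finsupp.single j 1) a := by
  have hαi : (α - Finsupp.single j 1 : Fin n →₀ ℕ) i = α i := by simp [hij]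
  rw [qDunkl_monomial, smul_monomial, qDunkl_monomial, hαi, smul_monomial, smul_monomial,
    smul_smul, tsub_right_comm]

end

theorem qDunkl_commute_general (n : ℕ) (q : ℂ) (μ : Fin n → ℝ) (i j : Fin n) (hij : i ≠ j)
    (f : MvPolynomial (Fin n) ℂ) :
    qDunkl n q μ i (qDunkl n q μ j f) = qDunkl n q μ j (qDunkl n q μ i f) := by
  induction f using MvPolynomial.induction_on' with
  | monomial α a =>
    rw [qDunkl_qDunkl_monomial q μ hij, qDunkl_qDunkl_monomial q μ hij.symm, mul_comm,
      tsub_right_comm]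
  | add f g hf hg => simp only [qDunkl_add, hf, hg]

/-- The q-Dunkl operators mutually commute: `D_i^q D_j^q = D_j^q D_i^q` on polynomials. -/
theorem qDunkl_commute (n : ℕ) (q : ℂ) (hq0 : q ≠ 0) (hq1 : ‖q‖ ≠ 1)
    (μ : Fin n → ℝ) (hμ : ∀ i, 0 < μ i) (i j : Fin n) (hij : i ≠ j)
    (f : MvPolynomial (Fin n) ℂ) :
    qDunkl n q μ i (qDunkl n q μ j f) = qDunkl n q μ j (qDunkl n q μ i f) :=
  qDunkl_commute_general n q μ i j hij f
end

section
/- Let q be a positive real number, q ≠ 1, and define an inner product on complex polynomials in one variable by ⟨P, Q⟩ = (conj(P)(D^q) Q)(0), where D^q is the one-variable q-Dunkl operator with parameter μ > 0. Then ⟨x^a, x^b⟩ = δ_{a,b} ∏_{j=1}^{a} [μ, j; q], and this is a positive definite Hermitian inner product on polynomials. -/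
open Polynomial

/-- Rescaling the variable by `c`: `(T_c p)(x) = p(cx)`. -/
noncomputable def varScale1 (c : ℂ) (p : Polynomial ℂ) : Polynomial ℂ :=
  p.comp (C c * X)

/-- The one-variable q-Dunkl operator
`D^q = (q^μ/(q−q⁻¹))(T_q − r)/x − (q^{−μ}/(q−q⁻¹))(T_q⁻¹ − r)/x`. -/
noncomputable def qDunkl1 (q : ℂ) (μ : ℝ) (p : Polynomial ℂ) : Polynomial ℂ :=
  (q ^ ((μ : ℝ) : ℂ) / (q - q⁻¹)) • (varScale1 q p - varScale1 (-1) p).divX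
    - (q ^ ((-μ : ℝ) : ℂ) / (q - q⁻¹)) • (varScale1 q⁻¹ p - varScale1 (-1) p).divX

/-- The q-Dunkl-Fischer pairing `⟨P, Q⟩ = (conj(P)(D^q) Q)(0)`. -/
noncomputable def qFischer (q : ℂ) (μ : ℝ) (P Q : Polynomial ℂ) : ℂ :=
  Polynomial.eval 0
    (∑ k ∈ Finset.range (P.natDegree + 1),
      (starRingEnd ℂ) (P.coeff k) • (qDunkl1 q μ)^[k] Q)

/-- The q-number bracket `[μ, j; q] = [μ+j]_q − (−1)^j [μ]_q`. -/
noncomputable def muBracket (q : ℂ) (μ : ℝ) (j : ℕ) : ℂ :=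
  (q ^ ((μ + (j : ℝ)) : ℂ) - q ^ ((-(μ + (j : ℝ)) : ℝ) : ℂ)) / (q - q⁻¹)
    - (-1 : ℂ) ^ j * ((q ^ ((μ : ℝ) : ℂ) - q ^ ((-μ : ℝ) : ℂ)) / (q - q⁻¹))

/-!
On monomials the q-Dunkl operator lowers the degree by one with a scalar factor,
`D^q x^n = [μ, n; q] x^(n-1)`, so `((D^q)^k Q)(0)` is the `k`-th coefficient of `Q` times
`[μ, 1; q] ⋯ [μ, k; q]`. The pairing is therefore the diagonal form
`⟨P, Q⟩ = ∑ₖ conj(Pₖ) Qₖ ∏_{j ≤ k} [μ, j; q]`. For real `q > 0`, `q ≠ 1`, the q-number `[x]_q` is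
real and strictly increasing in `x`, hence `[μ + j]_q > [μ]_q ≥ (-1)^j [μ]_q` for `μ ≥ 0`, `j ≥ 1`:
all weights are positive reals, which gives both the Hermitian symmetry and positivity.
-/

open Finset
open scoped ComplexOrder

noncomputable def muBracketFactorial (q : ℂ) (μ : ℝ) (k : ℕ) : ℂ :=
  ∏ j ∈ Icc 1 k, muBracket q μ j

lemma coeff_varScale1 (c : ℂ) (p : ℂ[X]) (n : ℕ) :
    (varScale1 c p).coeff n = c ^ n * p.coeff n := by
  rw [varScale1, comp_C_mul_X_coeff, mul_comm]

lemma muBracket_succ {q : ℂ} (hq : q ≠ 0) (μ : ℝ) (n : ℕ) :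
    muBracket q μ (n + 1)
      = q ^ (μ : ℂ) / (q - q⁻¹) * (q ^ (n + 1) - (-1) ^ (n + 1))
        - q ^ ((-μ : ℝ) : ℂ) / (q - q⁻¹) * (q⁻¹ ^ (n + 1) - (-1) ^ (n + 1)) := by
  have hcast : ((((n + 1 : ℕ) : ℝ)) : ℂ) = ((n + 1 : ℕ) : ℂ) := Complex.ofReal_natCast _
  have hneg : ((-(μ + ((n + 1 : ℕ) : ℝ)) : ℝ) : ℂ) = ((-μ : ℝ) : ℂ) + -((n + 1 : ℕ) : ℂ) := by
    push_cast; ring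
  rw [muBracket, hcast, hneg, Complex.cpow_add _ _ hq, Complex.cpow_add _ _ hq,
    Complex.cpow_neg, Complex.cpow_natCast, ← inv_pow]
  ring

section Dunkl

variable {q : ℂ} (μ : ℝ)

lemma coeff_qDunkl1 (hq : q ≠ 0) (p : ℂ[X]) (n : ℕ) :
    (qDunkl1 q μ p).coeff n = muBracket q μ (n + 1) * p.coeff (n + 1) := by
  simp only [qDunkl1, coeff_sub, coeff_smul, coeff_divX, coeff_varScale1, smul_eq_mul,
    muBracket_succ hq]
  ring

lemma coeff_qDunkl1_iterate (hq : q ≠ 0) (p : ℂ[X]) (k n : ℕ) :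
    ((qDunkl1 q μ)^[k] p).coeff n
      = (∏ j ∈ Ioc n (n + k), muBracket q μ j) * p.coeff (n + k) := by
  induction k generalizing p with
  | zero => simp
  | succ k ih =>
    rw [Function.iterate_succ_apply, ih, coeff_qDunkl1 μ hq, ← add_assoc,
      prod_Ioc_succ_top (Nat.le_add_right n k), mul_assoc]

lemma eval_zero_qDunkl1_iterate (hq : q ≠ 0) (p : ℂ[X]) (k : ℕ) :
    ((qDunkl1 q μ)^[k] p).eval 0 = muBracketFactorial q μ k * p.coeff k := by
  rw [← coeff_zero_eq_eval_zero, coeff_qDunkl1_iterate μ hq, zero_add, muBracketFactorial,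
    ← Icc_add_one_left_eq_Ioc, zero_add]

lemma qFischer_eq_sum (hq : q ≠ 0) (P Q : ℂ[X]) {N : ℕ} (hN : P.natDegree < N) :
    qFischer q μ P Q
      = ∑ k ∈ range N, starRingEnd ℂ (P.coeff k) * muBracketFactorial q μ k * Q.coeff k := by
  rw [qFischer, eval_finsetSum]
  refine (sum_subset (range_subset_range.mpr hN) fun k _ hk => ?_).trans
    (sum_congr rfl fun k _ => ?_)
  · rw [coeff_eq_zero_of_natDegree_lt (by simpa using hk), map_zero, zero_smul, eval_zero]
  · rw [eval_smul, eval_zero_qDunkl1_iterate μ hq, smul_eq_mul, mul_assoc]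

lemma qFischer_X_pow_X_pow (hq : q ≠ 0) (a b : ℕ) :
    qFischer q μ (X ^ a) (X ^ b) = if a = b then muBracketFactorial q μ a else 0 := by
  rw [qFischer_eq_sum μ hq _ _ (N := a + 1) (by simp),
    sum_eq_single_of_mem a (self_mem_range_succ a) fun k _ hk => by simp [coeff_X_pow, hk]]
  simp [coeff_X_pow]

end Dunkl

noncomputable def qNumber (q x : ℝ) : ℝ := (q ^ x - q ^ (-x)) / (q - q⁻¹)

lemma qNumber_zero (q : ℝ) : qNumber q 0 = 0 := by simp [qNumber]

lemma qNumber_inv {q : ℝ} (hq : 0 < q) : qNumber q⁻¹ = qNumber q := by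
  ext x
  simp only [qNumber, Real.inv_rpow hq.le, inv_inv, ← Real.rpow_neg hq.le, neg_neg]
  rw [← neg_sub q, ← neg_sub (q ^ x), neg_div_neg_eq]

lemma qNumber_strictMono_of_one_lt {q : ℝ} (hq : 1 < q) : StrictMono (qNumber q) := by
  have hden : 0 < q - q⁻¹ := sub_pos.mpr (inv_lt_one_of_one_lt₀ hq |>.trans hq)
  intro x y hxy
  have hx : q ^ x < q ^ y := (Real.rpow_lt_rpow_left_iff hq).mpr hxy
  have hnx : q ^ (-y) < q ^ (-x) := (Real.rpow_lt_rpow_left_iff hq).mpr (neg_lt_neg hxy)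
  exact div_lt_div_of_pos_right (by linarith) hden

lemma qNumber_strictMono {q : ℝ} (hq0 : 0 < q) (hq1 : q ≠ 1) : StrictMono (qNumber q) := by
  rcases hq1.lt_or_gt with hlt | hgt
  · exact qNumber_inv hq0 ▸ qNumber_strictMono_of_one_lt ((one_lt_inv₀ hq0).mpr hlt)
  · exact qNumber_strictMono_of_one_lt hgt

lemma muBracket_ofReal {q : ℝ} (hq : 0 < q) (μ : ℝ) (j : ℕ) :
    muBracket q μ j = (qNumber q (μ + j) - (-1) ^ j * qNumber q μ : ℝ) := by
  simp only [muBracket, qNumber]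
  push_cast [Complex.ofReal_cpow hq.le]
  ring_nf

lemma muBracket_pos {q : ℝ} (hq0 : 0 < q) (hq1 : q ≠ 1) {μ : ℝ} (hμ : 0 ≤ μ) {j : ℕ}
    (hj : 1 ≤ j) : 0 < muBracket q μ j := by
  have hmono := qNumber_strictMono hq0 hq1
  have hμnonneg : 0 ≤ qNumber q μ := qNumber_zero q ▸ hmono.monotone hμ
  have hlt : qNumber q μ < qNumber q (μ + j) := hmono (by simp; omega)
  have hsign : (-1 : ℝ) ^ j * qNumber q μ ≤ qNumber q μ :=
    mul_le_of_le_one_left hμnonneg (by rcases neg_one_pow_eq_or ℝ j with h | h <;> simp [h])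
  rw [muBracket_ofReal hq0, Complex.zero_lt_real]
  linarith

lemma conj_muBracketFactorial {q : ℝ} (hq : 0 < q) (μ : ℝ) (k : ℕ) :
    starRingEnd ℂ (muBracketFactorial q μ k) = muBracketFactorial q μ k := by
  simp only [muBracketFactorial, map_prod, muBracket_ofReal hq, Complex.conj_ofReal]

lemma muBracketFactorial_pos {q : ℝ} (hq0 : 0 < q) (hq1 : q ≠ 1) {μ : ℝ} (hμ : 0 ≤ μ)
    (k : ℕ) : 0 < muBracketFactorial q μ k :=
  prod_pos fun _ hj => muBracket_pos hq0 hq1 hμ (mem_Icc.mp hj).1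

lemma qFischer_eq_conj {q : ℝ} (hq : 0 < q) (μ : ℝ) (P Q : ℂ[X]) :
    qFischer q μ P Q = starRingEnd ℂ (qFischer q μ Q P) := by
  have hq' : (q : ℂ) ≠ 0 := Complex.ofReal_ne_zero.mpr hq.ne'
  rw [qFischer_eq_sum μ hq' P Q (Nat.lt_succ_of_le (le_max_left _ Q.natDegree)),
    qFischer_eq_sum μ hq' Q P (Nat.lt_succ_of_le (le_max_right P.natDegree _)), map_sum]
  refine sum_congr rfl fun k _ => ?_
  rw [map_mul, map_mul, Complex.conj_conj, conj_muBracketFactorial hq]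
  ring

lemma qFischer_self_pos {q : ℝ} (hq0 : 0 < q) (hq1 : q ≠ 1) {μ : ℝ} (hμ : 0 ≤ μ) {P : ℂ[X]}
    (hP : P ≠ 0) : 0 < qFischer q μ P P := by
  have hq' : (q : ℂ) ≠ 0 := Complex.ofReal_ne_zero.mpr hq0.ne'
  have hterm (k : ℕ) : starRingEnd ℂ (P.coeff k) * muBracketFactorial q μ k * P.coeff k
      = muBracketFactorial q μ k * (star (P.coeff k) * P.coeff k) := by
    rw [Complex.star_def]; ring
  rw [qFischer_eq_sum μ hq' P P (Nat.lt_succ_self _)]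
  refine sum_pos' (fun k _ => ?_) ⟨P.natDegree, self_mem_range_succ _, ?_⟩
  · rw [hterm]
    exact mul_nonneg (muBracketFactorial_pos hq0 hq1 hμ k).le (star_mul_self_nonneg _)
  · rw [hterm]
    exact mul_pos (muBracketFactorial_pos hq0 hq1 hμ _)
      (star_mul_self_pos (.of_ne_zero (leadingCoeff_ne_zero.mpr hP)))

/-- For positive real `q ≠ 1` and `μ > 0`, the q-Dunkl-Fischer pairing satisfies
`⟨x^a, x^b⟩ = δ_{a,b} ∏_{j=1}^a [μ, j; q]` and is a positive definite Hermitian inner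
product on complex polynomials. -/
theorem qFischer_inner_product (q : ℝ) (hq0 : 0 < q) (hq1 : q ≠ 1) (μ : ℝ) (hμ : 0 < μ) :
    (∀ a b : ℕ,
      qFischer (q : ℂ) μ (X ^ a) (X ^ b)
        = if a = b then ∏ j ∈ Finset.Icc 1 a, muBracket (q : ℂ) μ j else 0)
    ∧ (∀ P Q : Polynomial ℂ, qFischer (q : ℂ) μ P Q = (starRingEnd ℂ) (qFischer (q : ℂ) μ Q P))
    ∧ (∀ P : Polynomial ℂ, P ≠ 0 →
        0 < (qFischer (q : ℂ) μ P P).re ∧ (qFischer (q : ℂ) μ P P).im = 0) := by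
  refine ⟨qFischer_X_pow_X_pow μ (Complex.ofReal_ne_zero.mpr hq0.ne'), qFischer_eq_conj hq0 μ,
    fun P hP => ?_⟩
  obtain ⟨hre, him⟩ := Complex.pos_iff.mp (qFischer_self_pos hq0 hq1 hμ.le hP)
  exact ⟨hre, him.symm⟩
end

section
/- Assume TX = qXT, TD = q⁻¹DT, TT⁻¹ = T⁻¹T = 1, and DX + XD = α(q+1)/(q−q⁻¹) T − β(q⁻¹+1)/(q−q⁻¹) T⁻¹. Then for every natural m, D X^{2m+1} + X^{2m+1} D = α (q^{2m+1}+1)/(q−q⁻¹) X^{2m} T − β (q^{−2m−1}+1)/(q−q⁻¹) X^{2m} T⁻¹. -/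
/-- If `DX + XD = α(q+1)/(q−q⁻¹) T − β(q⁻¹+1)/(q−q⁻¹) T⁻¹`, `TX = qXT`, `TD = q⁻¹DT`,
`TT⁻¹ = T⁻¹T = 1`, then for every natural `m`:
`D X^{2m+1} + X^{2m+1} D
  = α (q^{2m+1}+1)/(q−q⁻¹) X^{2m} T − β (q^{−2m−1}+1)/(q−q⁻¹) X^{2m} T⁻¹`. -/
theorem anticommutator_odd_powers {A : Type*} [Ring A] [Algebra ℂ A]
    (q α β : ℂ) (hq0 : q ≠ 0) (hq1 : q ≠ 1) (hqm1 : q ≠ -1)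
    (X D T T' : A)
    (h1 : T * T' = 1) (h2 : T' * T = 1)
    (h3 : D * X + X * D = (α * (q + 1) / (q - q⁻¹)) • T - (β * (q⁻¹ + 1) / (q - q⁻¹)) • T')
    (h4 : T * X = q • (X * T)) (h5 : T * D = q⁻¹ • (D * T))
    (m : ℕ) :
    D * X ^ (2 * m + 1) + X ^ (2 * m + 1) * D
      = (α * (q ^ (2 * m + 1) + 1) / (q - q⁻¹)) • (X ^ (2 * m) * T)
        - (β * (q ^ (-(2 * (m : ℤ) + 1)) + 1) / (q - q⁻¹)) • (X ^ (2 * m) * T') := by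
  have hu : q - q⁻¹ ≠ 0 := by
    intro h
    have hsq : (q - 1) * (q + 1) = 0 := by
      field_simp at h
      linear_combination h
    rcases mul_eq_zero.1 hsq with h' | h'
    · exact hq1 (by linear_combination h')
    · exact hqm1 (by linear_combination h')
  have h4' : T' * X = q⁻¹ • (X * T') := by
    have hXT : X * T = q⁻¹ • (T * X) := by
      rw [h4, smul_smul, inv_mul_cancel₀ hq0, one_smul]
    have e : T' * (X * T) * T' = T' * X := by rw [mul_assoc, mul_assoc, h1, mul_one]
    calc T' * X = T' * (X * T) * T' := e.symm
      _ = q⁻¹ • (T' * (T * X) * T') := by rw [hXT, mul_smul_comm, smul_mul_assoc]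
      _ = q⁻¹ • (X * T') := by rw [← mul_assoc, h2, one_mul]
  have hTX : ∀ k : ℕ, T * X ^ k = q ^ k • (X ^ k * T) := by
    intro k; induction k with
    | zero => simp
    | succ n ih =>
      rw [pow_succ, pow_succ, ← mul_assoc, ih, smul_mul_assoc, mul_assoc, h4,
        mul_smul_comm, smul_smul, mul_assoc]
  have hT'X : ∀ k : ℕ, T' * X ^ k = (q⁻¹) ^ k • (X ^ k * T') := by
    intro k; induction k with
    | zero => simp
    | succ n ih =>
      rw [pow_succ, pow_succ, ← mul_assoc, ih, smul_mul_assoc, mul_assoc, h4',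
        mul_smul_comm, smul_smul, mul_assoc]
  have hz : ∀ k : ℕ, q ^ (-(2 * (k : ℤ) + 1)) = (q⁻¹) ^ (2 * k + 1) := by
    intro k
    rw [show (-(2 * (k : ℤ) + 1)) = -((2 * k + 1 : ℕ) : ℤ) by push_cast; ring,
      zpow_neg, zpow_natCast, inv_pow]
  induction m with
  | zero => simpa using h3
  | succ n ih =>
    rw [hz] at ih ⊢
    have key : ∀ Y : A, D * (X * Y * X) + (X * Y * X) * D
        = (D * X + X * D) * (Y * X) + (X * Y) * (D * X + X * D)
          - X * (D * Y + Y * D) * X := by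
      intro Y; noncomm_ring
    have p1 : X ^ (2 * (n + 1) + 1) = X * X ^ (2 * n + 1) * X := by
      rw [show 2 * (n + 1) + 1 = 1 + (2 * n + 1) + 1 by ring, pow_add, pow_add, pow_one]
    have p2 : X * X ^ (2 * n + 1) = X ^ (2 * n + 2) := by
      rw [← pow_succ']
    have p3 : X ^ (2 * n + 1) * X = X ^ (2 * n + 2) := (pow_succ X (2 * n + 1)).symm
    have t1 : X * (X ^ (2 * n) * T) * X = q • (X ^ (2 * n + 2) * T) := by
      have e : X * (X ^ (2 * n) * T) * X = X ^ (2 * n + 1) * (T * X) := by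
        rw [pow_succ']; noncomm_ring
      rw [e, h4, mul_smul_comm, ← mul_assoc, ← pow_succ]
    have t1' : X * (X ^ (2 * n) * T') * X = q⁻¹ • (X ^ (2 * n + 2) * T') := by
      have e : X * (X ^ (2 * n) * T') * X = X ^ (2 * n + 1) * (T' * X) := by
        rw [pow_succ']; noncomm_ring
      rw [e, h4', mul_smul_comm, ← mul_assoc, ← pow_succ]
    rw [p1, key, p2, p3, h3, ih]
    simp only [sub_mul, mul_sub, smul_mul_assoc, mul_smul_comm, hTX, hT'X, t1, t1', smul_smul]
    rw [show 2 * (n + 1) = 2 * n + 2 by ring]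
    match_scalars
    · ring
    · ring
end

section
/- Let q be a positive real, q ≠ 1, and γ > 0. Suppose an operator Γ on a vector space satisfies, on an eigenvector ψ: Γψ = (−1)^k [k + γ − 1/2]_q ψ for some natural number k, where [a]_q = (q^a − q^{−a})/(q − q⁻¹). Then the map k ↦ (−1)^k [k + γ − 1/2]_q is injective on ℕ; i.e., if (−1)^k [k + γ − 1/2]_q = (−1)^{k'} [k' + γ − 1/2]_q for naturals k, k', then k = k'. -/
private lemma strictF {q : ℝ} (hq : 1 < q) {x y : ℝ} (hxy : x < y) :
    q ^ x - q ^ (-x) < q ^ y - q ^ (-y) := by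
  have h1 : q ^ x < q ^ y := (Real.rpow_lt_rpow_left_iff hq).mpr hxy
  have h2 : q ^ (-y) < q ^ (-x) := (Real.rpow_lt_rpow_left_iff hq).mpr (by linarith)
  linarith

private lemma key (q γ : ℝ) (hq : 1 < q) (hγ : 0 < γ) (k k' : ℕ) (hkk : k < k')
    (h : (-1 : ℝ) ^ k * ((q ^ ((k : ℝ) + γ - 1/2) - q ^ (-((k : ℝ) + γ - 1/2))) / (q - q⁻¹))
       = (-1 : ℝ) ^ k' * ((q ^ ((k' : ℝ) + γ - 1/2) - q ^ (-((k' : ℝ) + γ - 1/2))) / (q - q⁻¹))) :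
    False := by
  set a : ℝ := (k : ℝ) + γ - 1/2 with ha
  set b : ℝ := (k' : ℝ) + γ - 1/2 with hb
  have hq0 : (0:ℝ) < q := lt_trans one_pos hq
  have hqi : q⁻¹ < 1 := by
    rw [inv_lt_one_iff₀]; right; exact hq
  have hd : q - q⁻¹ ≠ 0 := by nlinarith
  have h2 : (-1:ℝ)^k * (q ^ a - q ^ (-a)) = (-1:ℝ)^k' * (q ^ b - q ^ (-b)) := by
    have h3 := congrArg (fun z => z * (q - q⁻¹)) h
    simpa only [mul_assoc, div_mul_cancel₀ _ hd] using h3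
  have h' : |q ^ a - q ^ (-a)| = |q ^ b - q ^ (-b)| := by
    have := congrArg abs h2
    simpa [abs_mul, abs_pow] using this
  have hk1 : (1:ℝ) ≤ (k':ℝ) := by
    have : 1 ≤ k' := Nat.one_le_iff_ne_zero.mpr (by omega)
    exact_mod_cast this
  have hkr : (k:ℝ) < (k':ℝ) := by exact_mod_cast hkk
  have hab : a < b := by simp only [ha, hb]; linarith
  have hnab : -a < b := by
    have hk0 : (0:ℝ) ≤ (k:ℝ) := Nat.cast_nonneg k
    simp only [ha, hb]; linarith
  have hb0 : (0:ℝ) < b := by simp only [hb]; linarith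
  have h0 : q ^ (0:ℝ) - q ^ (-(0:ℝ)) = 0 := by simp
  have hFb : 0 < q ^ b - q ^ (-b) := by
    have := strictF hq hb0
    simpa using this
  have hlt : |q ^ a - q ^ (-a)| < q ^ b - q ^ (-b) := by
    rcases abs_cases (q ^ a - q ^ (-a)) with ⟨he, _⟩ | ⟨he, _⟩
    · rw [he]; exact strictF hq hab
    · rw [he]
      have := strictF hq hnab
      rw [neg_neg] at this
      linarith
  rw [h', abs_of_pos hFb] at hlt
  exact lt_irrefl _ hlt

private lemma main_gt1 (q γ : ℝ) (hq : 1 < q) (hγ : 0 < γ) (k k' : ℕ)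
    (h : (-1 : ℝ) ^ k * ((q ^ ((k : ℝ) + γ - 1/2) - q ^ (-((k : ℝ) + γ - 1/2))) / (q - q⁻¹))
       = (-1 : ℝ) ^ k' * ((q ^ ((k' : ℝ) + γ - 1/2) - q ^ (-((k' : ℝ) + γ - 1/2))) / (q - q⁻¹))) :
    k = k' := by
  rcases lt_trichotomy k k' with hlt | heq | hgt
  · exact absurd (key q γ hq hγ k k' hlt h) not_false
  · exact heq
  · exact absurd (key q γ hq hγ k' k hgt h.symm) not_false

/-- For positive real `q ≠ 1` and `γ > 0`, the map
`k ↦ (-1)^k [k + γ - 1/2]_q` is injective on ℕ, where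
`[a]_q = (q^a - q^{-a})/(q - q⁻¹)`. -/
theorem eigenvalue_injective (q γ : ℝ) (hq0 : 0 < q) (hq1 : q ≠ 1) (hγ : 0 < γ)
    (k k' : ℕ)
    (h : (-1 : ℝ) ^ k * ((q ^ ((k : ℝ) + γ - 1/2) - q ^ (-((k : ℝ) + γ - 1/2))) / (q - q⁻¹))
       = (-1 : ℝ) ^ k' * ((q ^ ((k' : ℝ) + γ - 1/2) - q ^ (-((k' : ℝ) + γ - 1/2))) / (q - q⁻¹))) :
    k = k' := by
  rcases lt_or_gt_of_ne hq1 with hlt | hgt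
  · -- q < 1 : use q⁻¹ > 1
    have hqi : 1 < q⁻¹ := (one_lt_inv_iff₀).mpr ⟨hq0, hlt⟩
    have hrw : ∀ x : ℝ, ((q⁻¹) ^ x - (q⁻¹) ^ (-x)) / (q⁻¹ - (q⁻¹)⁻¹)
        = (q ^ x - q ^ (-x)) / (q - q⁻¹) := by
      intro x
      rw [Real.inv_rpow hq0.le, Real.inv_rpow hq0.le, ← Real.rpow_neg hq0.le,
        ← Real.rpow_neg hq0.le, neg_neg, inv_inv]
      rw [show q ^ (-x) - q ^ x = -(q ^ x - q ^ (-x)) by ring,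
        show q⁻¹ - q = -(q - q⁻¹) by ring, neg_div_neg_eq]
    apply main_gt1 q⁻¹ γ hqi hγ k k'
    rw [hrw, hrw]
    exact h
  · exact main_gt1 q γ hgt hγ k k' h
end
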